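/- arXiv:2106.07305 — 4 statements merged into one kernel-verified Lean document; each statement's English description precedes it below -/
import Mathlib

section
/- Let K^t: ℝ^m × ℝ^m → ℂ satisfy |K^t(x,y)| ≤ C·t^{m−1}/(1+t|x−y|)^{m+1}. Then the operator norm of the integral operator A^t with kernel K^t tends to 0 as t → ∞. -/
open MeasureTheory
open scoped NNReal ENNReal



lemma higson_aux_int (m : ℕ) {t : ℝ} (ht : 0 < t) (x : EuclideanSpace ℝ (Fin m)) :
    (∫⁻ y : EuclideanSpace ℝ (Fin m),
      ENNReal.ofReal (((1 + t * ‖x - y‖) ^ (m + 1))⁻¹)) =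
    ENNReal.ofReal (t⁻¹ ^ m *
      ∫ z : EuclideanSpace ℝ (Fin m), (1 + ‖z‖) ^ (-(m + 1 : ℝ))) := by
  set φ : EuclideanSpace ℝ (Fin m) → ℝ := fun z => (1 + ‖z‖) ^ (-(m + 1 : ℝ)) with hφdef
  have hφint : Integrable φ := by
    apply integrable_one_add_norm (E := EuclideanSpace ℝ (Fin m))
    rw [finrank_euclideanSpace_fin]
    exact_mod_cast lt_add_one m
  have key : ∀ z : EuclideanSpace ℝ (Fin m), ((1 + t * ‖z‖) ^ (m + 1))⁻¹ = φ (t • z) := by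
    intro z
    have h1 : ‖t • z‖ = t * ‖z‖ := by
      rw [norm_smul, Real.norm_eq_abs, abs_of_pos ht]
    have h2 : (0:ℝ) < 1 + t * ‖z‖ := by positivity
    rw [hφdef]
    simp only [h1]
    rw [Real.rpow_neg h2.le, show ((m:ℝ) + 1) = ((m + 1 : ℕ) : ℝ) by push_cast; ring,
      Real.rpow_natCast]
  have hmeasg : Measurable fun z : EuclideanSpace ℝ (Fin m) =>
      ENNReal.ofReal (((1 + t * ‖z‖) ^ (m + 1))⁻¹) :=
    (((measurable_const.add (measurable_const.mul measurable_norm)).pow_const _).inv).ennreal_ofReal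
  have step1 : (∫⁻ y : EuclideanSpace ℝ (Fin m),
      ENNReal.ofReal (((1 + t * ‖x - y‖) ^ (m + 1))⁻¹)) =
      ∫⁻ z : EuclideanSpace ℝ (Fin m), ENNReal.ofReal (((1 + t * ‖z‖) ^ (m + 1))⁻¹) :=
    (MeasureTheory.Measure.measurePreserving_sub_left volume x).lintegral_comp hmeasg
  rw [step1]
  simp_rw [key]
  rw [← ofReal_integral_eq_lintegral_ofReal
      ((integrable_comp_smul_iff volume φ ht.ne').2 hφint)
      (Filter.Eventually.of_forall fun z => Real.rpow_nonneg (by positivity) _)]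
  congr 1
  rw [MeasureTheory.Measure.integral_comp_smul volume φ t, finrank_euclideanSpace_fin,
    smul_eq_mul, abs_of_pos (by positivity), inv_pow]

lemma higson_aux_row (m : ℕ) {C t : ℝ} (hC : 0 ≤ C) (ht : 0 < t)
    (g : EuclideanSpace ℝ (Fin m) → ℂ) (x : EuclideanSpace ℝ (Fin m))
    (hg : ∀ y, ‖g y‖ ≤ C * t ^ (m - 1 : ℤ) / (1 + t * ‖x - y‖) ^ (m + 1)) :
    (∫⁻ y, (‖g y‖₊ : ℝ≥0∞)) ≤ ENNReal.ofReal
      ((C * ∫ z : EuclideanSpace ℝ (Fin m), (1 + ‖z‖) ^ (-(m + 1 : ℝ))) / t) := by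
  have hct : 0 ≤ C * t ^ (m - 1 : ℤ) := mul_nonneg hC (zpow_nonneg ht.le _)
  calc (∫⁻ y, (‖g y‖₊ : ℝ≥0∞))
      ≤ ∫⁻ y, ENNReal.ofReal (C * t ^ (m - 1 : ℤ)) *
          ENNReal.ofReal (((1 + t * ‖x - y‖) ^ (m + 1))⁻¹) := by
        refine lintegral_mono fun y => ?_
        rw [← ENNReal.ofReal_coe_nnreal, coe_nnnorm, ← ENNReal.ofReal_mul hct]
        exact ENNReal.ofReal_le_ofReal ((hg y).trans_eq (div_eq_mul_inv _ _))
    _ = ENNReal.ofReal (C * t ^ (m - 1 : ℤ)) *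
          ∫⁻ y, ENNReal.ofReal (((1 + t * ‖x - y‖) ^ (m + 1))⁻¹) :=
        lintegral_const_mul' _ _ ENNReal.ofReal_ne_top
    _ = ENNReal.ofReal (C * t ^ (m - 1 : ℤ)) * ENNReal.ofReal (t⁻¹ ^ m *
          ∫ z : EuclideanSpace ℝ (Fin m), (1 + ‖z‖) ^ (-(m + 1 : ℝ))) := by
        rw [higson_aux_int m ht x]
    _ = ENNReal.ofReal
          ((C * ∫ z : EuclideanSpace ℝ (Fin m), (1 + ‖z‖) ^ (-(m + 1 : ℝ))) / t) := by
        rw [← ENNReal.ofReal_mul hct]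
        congr 1
        rw [zpow_sub₀ ht.ne', zpow_natCast, zpow_one]
        have hm : t ^ m * t⁻¹ ^ m = 1 := by rw [← mul_pow, mul_inv_cancel₀ ht.ne', one_pow]
        linear_combination (C * t⁻¹ * ∫ z : EuclideanSpace ℝ (Fin m), (1 + ‖z‖) ^ (-(m + 1 : ℝ))) * hm

/-- Higson's lemma: if the kernels satisfy `|K^t(x,y)| ≤ C t^{m−1}/(1+t|x−y|)^{m+1}`,
then the operator norm of the integral operator `A^t f(x) = ∫ K^t(x,y) f(y) dy` on
`L²(ℝᵐ)` tends to `0` as `t → ∞`. -/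
theorem kernel_decay_operator_norm_tendsto_zero (m : ℕ) (C : ℝ)
    (K : ℝ → EuclideanSpace ℝ (Fin m) → EuclideanSpace ℝ (Fin m) → ℂ)
    (hmeas : ∀ t, Measurable (Function.uncurry (K t)))
    (hbound : ∀ t : ℝ, 0 < t → ∀ x y,
      ‖K t x y‖ ≤ C * t ^ (m - 1 : ℤ) / (1 + t * ‖x - y‖) ^ (m + 1)) :
    ∀ ε : ℝ≥0, 0 < ε → ∃ T : ℝ, ∀ t ≥ T,
      ∀ f : EuclideanSpace ℝ (Fin m) → ℂ, MemLp f 2 volume →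
        eLpNorm (fun x => ∫ y, K t x y * f y) 2 volume
          ≤ (ε : ℝ≥0∞) * eLpNorm f 2 volume := by
  have hC : 0 ≤ C := by
    by_contra hC
    push_neg at hC
    have h := hbound 1 one_pos 0 0
    simp only [sub_zero, norm_zero, mul_zero, add_zero, one_pow, one_zpow, mul_one, div_one] at h
    exact absurd (le_trans (norm_nonneg _) h) (not_le.2 hC)
  set Iφ : ℝ := ∫ z : EuclideanSpace ℝ (Fin m), (1 + ‖z‖) ^ (-(m + 1 : ℝ)) with hIφdef
  have hIφ0 : 0 ≤ Iφ := integral_nonneg fun z => Real.rpow_nonneg (by positivity) _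
  set D : ℝ := C * Iφ with hDdef
  have hD0 : 0 ≤ D := mul_nonneg hC hIφ0
  intro ε hε
  refine ⟨max 1 (D / (ε : ℝ)), fun t ht f hf => ?_⟩
  have ht1 : (1:ℝ) ≤ t := le_trans (le_max_left _ _) ht
  have htpos : (0:ℝ) < t := lt_of_lt_of_le one_pos ht1
  have hεpos : (0:ℝ) < (ε : ℝ) := hε
  have hDt : D / t ≤ (ε : ℝ) := by
    rw [div_le_iff₀ htpos]
    have h2 : D / (ε : ℝ) ≤ t := le_trans (le_max_right _ _) ht
    nlinarith [(div_le_iff₀ hεpos).1 h2]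
  set A : ℝ≥0∞ := ENNReal.ofReal (D / t) with hAdef
  have hAtop : A ≠ ⊤ := ENNReal.ofReal_ne_top
  have hAε : A ≤ (ε : ℝ≥0∞) := by
    rw [← ENNReal.ofReal_coe_nnreal]
    exact ENNReal.ofReal_le_ofReal hDt
  suffices h : eLpNorm (fun x => ∫ y, K t x y * f y) 2 volume ≤ A * eLpNorm f 2 volume from
    h.trans (mul_le_mul_left hAε _)
  -- replace f by a measurable representative
  obtain ⟨f', hf'sm, hff'⟩ := hf.1
  have hint : (fun x => ∫ y, K t x y * f y) = fun x => ∫ y, K t x y * f' y :=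
    funext fun x => integral_congr_ae (hff'.mono fun y hy => by simp only [hy])
  rw [hint, eLpNorm_congr_ae hff']
  set k := fun (x y : EuclideanSpace ℝ (Fin m)) => (‖K t x y‖₊ : ℝ≥0∞) with hkdef
  set F := fun (y : EuclideanSpace ℝ (Fin m)) => (‖f' y‖₊ : ℝ≥0∞) with hFdef
  have hFm : Measurable F := hf'sm.measurable.enorm
  have hFtop : ∀ y, F y ≠ ⊤ := fun y => ENNReal.coe_ne_top
  have hKm : Measurable (Function.uncurry (K t)) := hmeas t
  have hkm : Measurable fun p : EuclideanSpace ℝ (Fin m) × EuclideanSpace ℝ (Fin m) => k p.1 p.2 := hKm.enorm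
  have hkmx : ∀ x, Measurable (k x) := fun x =>
    (hKm.of_uncurry_left).enorm
  have hrow : ∀ x, (∫⁻ y, k x y) ≤ A := fun x =>
    higson_aux_row m hC htpos (K t x) x (fun y => hbound t htpos x y)
  have hcol : ∀ y, (∫⁻ x, k x y) ≤ A := fun y =>
    higson_aux_row m hC htpos (fun x => K t x y) y
      (fun x => by rw [norm_sub_rev]; exact hbound t htpos x y)
  have hhalf : ∀ a : ℝ≥0∞, a ^ (1/2 : ℝ) * a ^ (1/2 : ℝ) = a := fun a => by
    rw [← ENNReal.rpow_add_of_nonneg _ _ (by norm_num) (by norm_num)]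
    norm_num
  have hsq : ∀ a : ℝ≥0∞, (a ^ (1/2 : ℝ)) ^ (2 : ℝ) = a := fun a => by
    rw [← ENNReal.rpow_mul]; norm_num
  -- pointwise bound after squaring
  have hpt : ∀ x : EuclideanSpace ℝ (Fin m), (‖∫ y, K t x y * f' y‖₊ : ℝ≥0∞) ^ (2:ℝ)
      ≤ A * ∫⁻ y, k x y * F y ^ (2:ℝ) := by
    intro x
    have h1 : (‖∫ y, K t x y * f' y‖₊ : ℝ≥0∞) ≤ ∫⁻ y, k x y * F y := by
      refine (enorm_integral_le_lintegral_enorm _).trans_eq ?_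
      simp_rw [enorm_mul]
      rfl
    have h2 : (∫⁻ y, k x y * F y) ≤
        (∫⁻ y, k x y) ^ (1/2:ℝ) * (∫⁻ y, k x y * F y ^ (2:ℝ)) ^ (1/2:ℝ) := by
      have hcs := ENNReal.lintegral_mul_le_Lp_mul_Lq volume
        Real.HolderConjugate.two_two
        (f := fun y => k x y ^ (1/2:ℝ))
        (g := fun y => k x y ^ (1/2:ℝ) * F y)
        ((hkmx x).pow_const _).aemeasurable
        (((hkmx x).pow_const _).mul hFm).aemeasurable
      calc (∫⁻ y, k x y * F y)
          = ∫⁻ y, (fun y => k x y ^ (1/2:ℝ)) y * ((fun y => k x y ^ (1/2:ℝ) * F y) y) := by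
            refine lintegral_congr fun y => ?_
            rw [← mul_assoc, hhalf]
        _ ≤ (∫⁻ y, (k x y ^ (1/2:ℝ)) ^ (2:ℝ)) ^ (1/(2:ℝ)) *
              (∫⁻ y, (k x y ^ (1/2:ℝ) * F y) ^ (2:ℝ)) ^ (1/(2:ℝ)) := hcs
        _ = (∫⁻ y, k x y) ^ (1/2:ℝ) * (∫⁻ y, k x y * F y ^ (2:ℝ)) ^ (1/2:ℝ) := by
            congr 1
            · congr 1; exact lintegral_congr fun y => hsq _
            · congr 1
              refine lintegral_congr fun y => ?_
              rw [ENNReal.mul_rpow_of_nonneg _ _ (by norm_num : (0:ℝ) ≤ 2), hsq]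
    calc (‖∫ y, K t x y * f' y‖₊ : ℝ≥0∞) ^ (2:ℝ)
        ≤ ((∫⁻ y, k x y) ^ (1/2:ℝ) * (∫⁻ y, k x y * F y ^ (2:ℝ)) ^ (1/2:ℝ)) ^ (2:ℝ) :=
          ENNReal.rpow_le_rpow (h1.trans h2) (by norm_num)
      _ = (∫⁻ y, k x y) * (∫⁻ y, k x y * F y ^ (2:ℝ)) := by
          rw [ENNReal.mul_rpow_of_nonneg _ _ (by norm_num : (0:ℝ) ≤ 2), hsq, hsq]
      _ ≤ A * ∫⁻ y, k x y * F y ^ (2:ℝ) := mul_le_mul_left (hrow x) _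
  -- put everything together
  have h2r : (2 : ℝ≥0∞).toReal = (2:ℝ) := by simp
  rw [eLpNorm_eq_lintegral_rpow_enorm_toReal two_ne_zero ENNReal.ofNat_ne_top,
    eLpNorm_eq_lintegral_rpow_enorm_toReal two_ne_zero ENNReal.ofNat_ne_top, h2r]
  have hswap : (∫⁻ x, ∫⁻ y, k x y * F y ^ (2:ℝ)) = ∫⁻ y, (∫⁻ x, k x y) * F y ^ (2:ℝ) := by
    rw [lintegral_lintegral_swap]
    · exact lintegral_congr fun y => lintegral_mul_const' _ _
        (ENNReal.rpow_ne_top_of_nonneg (by norm_num) (hFtop y))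
    · exact (hkm.mul ((hFm.comp measurable_snd).pow_const _)).aemeasurable
  calc (∫⁻ x, (‖∫ y, K t x y * f' y‖₊ : ℝ≥0∞) ^ (2:ℝ)) ^ (1/(2:ℝ))
      ≤ (∫⁻ x, A * ∫⁻ y, k x y * F y ^ (2:ℝ)) ^ (1/(2:ℝ)) :=
        ENNReal.rpow_le_rpow (lintegral_mono hpt) (by norm_num)
    _ = (A * ∫⁻ y, (∫⁻ x, k x y) * F y ^ (2:ℝ)) ^ (1/(2:ℝ)) := by
        rw [lintegral_const_mul' _ _ hAtop, hswap]
    _ ≤ (A * ∫⁻ y, A * F y ^ (2:ℝ)) ^ (1/(2:ℝ)) := by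
        refine ENNReal.rpow_le_rpow (mul_le_mul_right (lintegral_mono fun y => ?_) _)
          (by norm_num)
        exact mul_le_mul_left (hcol y) _
    _ = (A * (A * ∫⁻ y, F y ^ (2:ℝ))) ^ (1/(2:ℝ)) := by
        rw [lintegral_const_mul' _ _ hAtop]
    _ = A * (∫⁻ y, F y ^ (2:ℝ)) ^ (1/(2:ℝ)) := by
        rw [← mul_assoc, ENNReal.mul_rpow_of_nonneg _ _ (by norm_num : (0:ℝ) ≤ 1/2),
          ENNReal.mul_rpow_of_nonneg _ _ (by norm_num : (0:ℝ) ≤ 1/2), hhalf]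
end

section
/- For α, β continuous compactly supported functions on ℝ^m × ℝ^m with convolution (α∗β)(x,w) = ∫ α(x, w−z) β(x,z) dz, the operators T^t with kernel t^m α(x,t(x−y)) satisfy ‖T^t_α T^t_β − T^t_{α∗β}‖ → 0 in operator norm as t → ∞ (assuming α, β are Lipschitz in the first variable, uniformly). -/
open MeasureTheory
open scoped NNReal ENNReal

/-- The fiberwise convolution `(α∗β)(x,w) = ∫ α(x, w−z) β(x,z) dz`. -/
noncomputable def fibConv {m : ℕ}
    (α β : EuclideanSpace ℝ (Fin m) → EuclideanSpace ℝ (Fin m) → ℂ)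
    (x w : EuclideanSpace ℝ (Fin m)) : ℂ :=
  ∫ z, α x (w - z) * β x z

lemma schur_bound {m : ℕ} (K : EuclideanSpace ℝ (Fin m) → EuclideanSpace ℝ (Fin m) → ℂ)
    (g : EuclideanSpace ℝ (Fin m) → ℝ≥0∞) (hg : Measurable g)
    (hK : ∀ x y, (‖K x y‖₊ : ℝ≥0∞) ≤ g (x - y))
    (hAfin : (∫⁻ v, g v) ≠ ∞)
    (u : EuclideanSpace ℝ (Fin m) → ℂ) (hu : AEMeasurable u volume) :
    eLpNorm (fun x => ∫ y, K x y * u y) 2 volume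
      ≤ (∫⁻ v, g v) * eLpNorm u 2 volume := by
  set A := ∫⁻ v, g v with hA
  have hgx : ∀ x : EuclideanSpace ℝ (Fin m), ∫⁻ y, g (x - y) = A :=
    fun x => (Measure.measurePreserving_sub_left volume x).lintegral_comp hg
  have hgy : ∀ y : EuclideanSpace ℝ (Fin m), ∫⁻ x, g (x - y) = A :=
    fun y => (measurePreserving_sub_right volume y).lintegral_comp hg
  -- pointwise bound
  have hpt : ∀ x, (‖∫ y, K x y * u y‖₊ : ℝ≥0∞) ≤ ∫⁻ y, g (x - y) * ‖u y‖₊ := by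
    intro x
    calc (‖∫ y, K x y * u y‖₊ : ℝ≥0∞) ≤ ∫⁻ y, ‖K x y * u y‖₊ :=
          enorm_integral_le_lintegral_enorm _
      _ ≤ ∫⁻ y, g (x - y) * ‖u y‖₊ := by
          refine lintegral_mono fun y => ?_
          rw [nnnorm_mul, ENNReal.coe_mul]
          exact mul_le_mul_left (hK x y) _
  -- Cauchy-Schwarz
  have hCS : ∀ x, (∫⁻ y, g (x - y) * ‖u y‖₊) ^ (2:ℝ)
      ≤ A * ∫⁻ y, g (x - y) * (‖u y‖₊ : ℝ≥0∞) ^ (2:ℝ) := by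
    intro x
    have h2 : (2:ℝ).HolderConjugate 2 := Real.HolderConjugate.two_two
    have hf : AEMeasurable (fun y => (g (x - y)) ^ (2⁻¹:ℝ)) volume :=
      ((hg.comp (measurable_const.sub measurable_id)).pow_const _).aemeasurable
    have hh : AEMeasurable (fun y => (g (x - y)) ^ (2⁻¹:ℝ) * (‖u y‖₊ : ℝ≥0∞)) volume :=
      hf.mul hu.enorm
    have := ENNReal.lintegral_mul_le_Lp_mul_Lq volume h2 hf hh
    have key : ∫⁻ y, g (x - y) * ‖u y‖₊
        ≤ (∫⁻ y, g (x - y)) ^ (1/2:ℝ) * (∫⁻ y, g (x - y) * (‖u y‖₊:ℝ≥0∞) ^ (2:ℝ)) ^ (1/2:ℝ) := by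
      refine le_trans (le_of_eq ?_) (this.trans (le_of_eq ?_))
      · refine lintegral_congr fun y => ?_
        show g (x - y) * _ = (g (x-y)) ^ (2⁻¹:ℝ) * ((g (x-y)) ^ (2⁻¹:ℝ) * _)
        rw [← mul_assoc, ← ENNReal.rpow_add_of_nonneg _ _ (by norm_num) (by norm_num)]
        norm_num
      · congr 1
        · congr 1
          refine lintegral_congr fun y => ?_
          rw [← ENNReal.rpow_mul]
          norm_num
        · congr 1
          refine lintegral_congr fun y => ?_
          rw [ENNReal.mul_rpow_of_nonneg _ _ (by norm_num : (0:ℝ) ≤ 2), ← ENNReal.rpow_mul]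
          norm_num
    calc (∫⁻ y, g (x - y) * ‖u y‖₊) ^ (2:ℝ)
        ≤ ((∫⁻ y, g (x - y)) ^ (1/2:ℝ)
            * (∫⁻ y, g (x - y) * (‖u y‖₊:ℝ≥0∞) ^ (2:ℝ)) ^ (1/2:ℝ)) ^ (2:ℝ) :=
          ENNReal.rpow_le_rpow key (by norm_num)
      _ = A * ∫⁻ y, g (x - y) * (‖u y‖₊:ℝ≥0∞) ^ (2:ℝ) := by
          rw [ENNReal.mul_rpow_of_nonneg _ _ (by norm_num : (0:ℝ) ≤ 2),
            ← ENNReal.rpow_mul, ← ENNReal.rpow_mul, hgx]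
          norm_num
  -- Tonelli
  have hmeas : AEMeasurable
      (fun p : EuclideanSpace ℝ (Fin m) × EuclideanSpace ℝ (Fin m) =>
        g (p.1 - p.2) * (‖u p.2‖₊ : ℝ≥0∞) ^ (2:ℝ)) (volume.prod volume) := by
    refine AEMeasurable.mul ?_ ?_
    · exact (hg.comp (measurable_fst.sub measurable_snd)).aemeasurable
    · exact ((hu.enorm.pow_const (2:ℝ)).comp_quasiMeasurePreserving
        Measure.quasiMeasurePreserving_snd)
  have hswap : ∫⁻ x, ∫⁻ y, g (x - y) * (‖u y‖₊:ℝ≥0∞) ^ (2:ℝ)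
      = A * ∫⁻ y, (‖u y‖₊:ℝ≥0∞) ^ (2:ℝ) := by
    rw [lintegral_lintegral_swap hmeas]
    calc ∫⁻ y, ∫⁻ x, g (x - y) * (‖u y‖₊:ℝ≥0∞) ^ (2:ℝ)
        = ∫⁻ y, (‖u y‖₊:ℝ≥0∞) ^ (2:ℝ) * A := by
          refine lintegral_congr fun y => ?_
          rw [lintegral_mul_const' _ _ (by simp), hgy]
          ring
      _ = A * ∫⁻ y, (‖u y‖₊:ℝ≥0∞) ^ (2:ℝ) := by
          exact (lintegral_mul_const'' A (hu.enorm.pow_const _)).trans (mul_comm _ _)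
  -- assemble
  have e2 : ((2:ℝ≥0∞)).toReal = (2:ℝ) := by norm_num
  rw [eLpNorm_eq_lintegral_rpow_enorm_toReal (by norm_num) (by norm_num),
    eLpNorm_eq_lintegral_rpow_enorm_toReal (by norm_num) (by norm_num), e2]
  have step : ∫⁻ x, (‖∫ y, K x y * u y‖₊ : ℝ≥0∞) ^ (2:ℝ)
      ≤ A * A * ∫⁻ y, (‖u y‖₊:ℝ≥0∞) ^ (2:ℝ) := by
    calc ∫⁻ x, (‖∫ y, K x y * u y‖₊ : ℝ≥0∞) ^ (2:ℝ)
        ≤ ∫⁻ x, A * ∫⁻ y, g (x - y) * (‖u y‖₊:ℝ≥0∞) ^ (2:ℝ) := by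
          refine lintegral_mono fun x => ?_
          exact le_trans (ENNReal.rpow_le_rpow (hpt x) (by norm_num)) (hCS x)
      _ = A * ∫⁻ x, ∫⁻ y, g (x - y) * (‖u y‖₊:ℝ≥0∞) ^ (2:ℝ) := by
          rw [lintegral_const_mul' _ _ (hA ▸ hAfin)]
      _ = A * A * ∫⁻ y, (‖u y‖₊:ℝ≥0∞) ^ (2:ℝ) := by rw [hswap, mul_assoc]
  calc (∫⁻ x, (‖∫ y, K x y * u y‖₊ : ℝ≥0∞) ^ (2:ℝ)) ^ (1/2:ℝ)
      ≤ (A * A * ∫⁻ y, (‖u y‖₊:ℝ≥0∞) ^ (2:ℝ)) ^ (1/2:ℝ) :=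
        ENNReal.rpow_le_rpow step (by norm_num)
    _ = A * (∫⁻ y, (‖u y‖₊:ℝ≥0∞) ^ (2:ℝ)) ^ (1/2:ℝ) := by
        rw [ENNReal.mul_rpow_of_nonneg _ _ (by norm_num : (0:ℝ) ≤ 1/2),
          ENNReal.mul_rpow_of_nonneg _ _ (by norm_num : (0:ℝ) ≤ 1/2),
          ← ENNReal.rpow_add_of_nonneg _ _ (by norm_num) (by norm_num)]
        norm_num

-- support lemma
lemma supp_radius {m : ℕ} {α : EuclideanSpace ℝ (Fin m) → EuclideanSpace ℝ (Fin m) → ℂ}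
    (hαc : HasCompactSupport (Function.uncurry α)) :
    ∃ R : ℝ, 0 ≤ R ∧ ∀ x w, R < ‖w‖ → α x w = 0 := by
  obtain ⟨r, hr⟩ := hαc.isBounded.subset_closedBall 0
  refine ⟨max r 0, le_max_right _ _, fun x w hw => ?_⟩
  by_contra h0
  have hmem : (x, w) ∈ tsupport (Function.uncurry α) :=
    subset_tsupport _ (by simpa [Function.uncurry] using h0)
  have := hr hmem
  rw [Metric.mem_closedBall, dist_zero_right] at this
  have : ‖w‖ ≤ r := le_trans (norm_snd_le (x, w)) this
  exact absurd (this.trans (le_max_left r 0)) (not_le.2 hw)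

lemma bound_const {m : ℕ} {α : EuclideanSpace ℝ (Fin m) → EuclideanSpace ℝ (Fin m) → ℂ}
    (hα : Continuous (Function.uncurry α)) (hαc : HasCompactSupport (Function.uncurry α)) :
    ∃ M : ℝ, 0 ≤ M ∧ ∀ x w, ‖α x w‖ ≤ M := by
  obtain ⟨M, hM⟩ := hα.norm.bddAbove_range_of_hasCompactSupport hαc.norm
  refine ⟨max M 0, le_max_right _ _, fun x w => ?_⟩
  exact le_trans (hM ⟨(x, w), rfl⟩) (le_max_left _ _)

section Identities

variable {m : ℕ} (α β : EuclideanSpace ℝ (Fin m) → EuclideanSpace ℝ (Fin m) → ℂ)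

/-- change of variables for the composed kernel -/
lemma comp_kernel_cov (x y : EuclideanSpace ℝ (Fin m)) {t : ℝ} (ht : 0 < t) :
    (∫ z, α x (t • (x - z)) * β z (t • (z - y)))
      = (t ^ m)⁻¹ • ∫ w, α x w * β (x - t⁻¹ • w) (t • (x - y) - w) := by
  have htne : t ≠ 0 := ne_of_gt ht
  have e1 : (fun z => α x (t • (x - z)) * β z (t • (z - y)))
      = fun z => (fun w => α x (t • w) * β (x - w) (t • (x - y) - t • w)) (x - z) := by
    funext z
    simp only
    congr 2
    · abel
    · rw [← smul_sub]
      congr 1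
      abel
  rw [e1, integral_sub_left_eq_self (fun w => α x (t • w) * β (x - w) (t • (x - y) - t • w)) volume x]
  have e2 : (fun w => α x (t • w) * β (x - w) (t • (x - y) - t • w))
      = fun w => (fun w' => α x w' * β (x - t⁻¹ • w') (t • (x - y) - w')) (t • w) := by
    funext w
    simp only [inv_smul_smul₀ htne]
  rw [e2, Measure.integral_comp_smul volume
    (fun w' => α x w' * β (x - t⁻¹ • w') (t • (x - y) - w')) t]
  congr 1
  rw [finrank_euclideanSpace_fin, abs_of_pos (by positivity)]

lemma fibConv_cov (x v : EuclideanSpace ℝ (Fin m)) :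
    fibConv α β x v = ∫ w, α x w * β x (v - w) := by
  have : fibConv α β x v = ∫ z, (fun w => α x w * β x (v - w)) (v - z) := by
    rw [fibConv]
    congr 1
    funext z
    simp [sub_sub_cancel]
  rw [this, integral_sub_left_eq_self (fun w => α x w * β x (v - w)) volume v]

end Identities

/-- Asymptotic multiplicativity: for `α, β` continuous, compactly supported on
`ℝᵐ × ℝᵐ` and uniformly Lipschitz in the first variable, the operators `T^t` with
kernel `tᵐ α(x, t(x−y))` satisfy `‖T^t_α T^t_β − T^t_{α∗β}‖ → 0` as `t → ∞`.
(The kernel of `T^t_α T^t_β` is `t^{2m} ∫ α(x,t(x−z)) β(z,t(z−y)) dz`.) -/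
theorem composition_asymptotically_multiplicative (m : ℕ)
    (α β : EuclideanSpace ℝ (Fin m) → EuclideanSpace ℝ (Fin m) → ℂ)
    (hα : Continuous (Function.uncurry α)) (hαc : HasCompactSupport (Function.uncurry α))
    (hβ : Continuous (Function.uncurry β)) (hβc : HasCompactSupport (Function.uncurry β))
    (Lα : ℝ) (hαLip : ∀ x x' w, ‖α x w - α x' w‖ ≤ Lα * ‖x - x'‖)
    (Lβ : ℝ) (hβLip : ∀ x x' w, ‖β x w - β x' w‖ ≤ Lβ * ‖x - x'‖) :
    ∀ ε : ℝ≥0, 0 < ε → ∃ T : ℝ, 1 ≤ T ∧ ∀ t ≥ T,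
      ∀ u : EuclideanSpace ℝ (Fin m) → ℂ, MemLp u 2 volume →
        eLpNorm (fun x => ∫ y,
            ((t ^ (2 * m) : ℝ) • (∫ z, α x (t • (x - z)) * β z (t • (z - y)))
              - (t ^ m : ℝ) • fibConv α β x (t • (x - y))) * u y) 2 volume
          ≤ (ε : ℝ≥0∞) * eLpNorm u 2 volume := by
  intro ε hε
  obtain ⟨Mα, hMα0, hMα⟩ := bound_const hα hαc
  obtain ⟨Rα, hRα0, hαsupp⟩ := supp_radius hαc
  obtain ⟨Rβ, hRβ0, hβsupp⟩ := supp_radius hβc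
  set Lβ' : ℝ := max Lβ 0 with hLβ'
  have hLβ'0 : 0 ≤ Lβ' := le_max_right _ _
  have hβLip' : ∀ x x' w, ‖β x w - β x' w‖ ≤ Lβ' * ‖x - x'‖ := fun x x' w =>
    (hβLip x x' w).trans (mul_le_mul_of_nonneg_right (le_max_left _ _) (norm_nonneg _))
  set Vα : ℝ := (volume (Metric.closedBall (0 : EuclideanSpace ℝ (Fin m)) Rα)).toReal with hVα
  have hVα0 : 0 ≤ Vα := ENNReal.toReal_nonneg
  set C : ℝ := Mα * Lβ' * Rα * Vα with hC
  have hC0 : 0 ≤ C := by positivity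
  set R : ℝ := Rα + Rβ with hR
  have hR0 : 0 ≤ R := by positivity
  set V1 : ℝ := (volume (Metric.ball (0 : EuclideanSpace ℝ (Fin m)) 1)).toReal with hV1
  have hV10 : 0 ≤ V1 := ENNReal.toReal_nonneg
  set D : ℝ := C * R ^ m * V1 with hD
  have hD0 : 0 ≤ D := by positivity
  refine ⟨max 1 (D / ε), le_max_left _ _, fun t ht u hu => ?_⟩
  have ht1 : (1 : ℝ) ≤ t := le_trans (le_max_left _ _) ht
  have ht0 : 0 < t := lt_of_lt_of_le one_pos ht1
  have htne : t ≠ 0 := ne_of_gt ht0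
  -- the kernel and the dominating function
  set K : EuclideanSpace ℝ (Fin m) → EuclideanSpace ℝ (Fin m) → ℂ := fun x y =>
    ((t ^ (2 * m) : ℝ) • (∫ z, α x (t • (x - z)) * β z (t • (z - y)))
      - (t ^ m : ℝ) • fibConv α β x (t • (x - y))) with hK
  set c : ℝ≥0∞ := ENNReal.ofReal (C * t ^ m / t) with hc
  set g : EuclideanSpace ℝ (Fin m) → ℝ≥0∞ :=
    (Metric.closedBall (0 : EuclideanSpace ℝ (Fin m)) (R / t)).indicator (fun _ => c) with hg
  have hgmeas : Measurable g := Measurable.indicator measurable_const measurableSet_closedBall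
  -- kernel bound
  have hKg : ∀ x y, (‖K x y‖₊ : ℝ≥0∞) ≤ g (x - y) := by
    intro x y
    by_cases hxy : ‖x - y‖ ≤ R / t
    · -- near case
      have hmem : x - y ∈ Metric.closedBall (0 : EuclideanSpace ℝ (Fin m)) (R / t) := by
        rwa [Metric.mem_closedBall, dist_zero_right]
      rw [hg, Set.indicator_of_mem hmem]
      rw [← enorm_eq_nnnorm, ← ofReal_norm]
      apply ENNReal.ofReal_le_ofReal
      have hAcont : Continuous (fun w : EuclideanSpace ℝ (Fin m) =>
          α x w * β (x - t⁻¹ • w) (t • (x - y) - w)) := by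
        apply Continuous.mul
        · exact hα.comp (Continuous.prodMk_right x)
        · exact hβ.comp ((continuous_const.sub (continuous_id.const_smul t⁻¹)).prodMk
            (continuous_const.sub continuous_id))
      have hBcont : Continuous (fun w : EuclideanSpace ℝ (Fin m) =>
          α x w * β x (t • (x - y) - w)) := by
        apply Continuous.mul
        · exact hα.comp (Continuous.prodMk_right x)
        · exact hβ.comp (continuous_const.prodMk (continuous_const.sub continuous_id))
      have hsuppA : ∀ w : EuclideanSpace ℝ (Fin m),
          w ∉ Metric.closedBall (0 : EuclideanSpace ℝ (Fin m)) Rα →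
            α x w * β (x - t⁻¹ • w) (t • (x - y) - w) = 0 := by
        intro w hw
        rw [Metric.mem_closedBall, dist_zero_right, not_le] at hw
        simp [hαsupp x w hw]
      have hsuppB : ∀ w : EuclideanSpace ℝ (Fin m),
          w ∉ Metric.closedBall (0 : EuclideanSpace ℝ (Fin m)) Rα →
            α x w * β x (t • (x - y) - w) = 0 := by
        intro w hw
        rw [Metric.mem_closedBall, dist_zero_right, not_le] at hw
        simp [hαsupp x w hw]
      have hAint : Integrable (fun w : EuclideanSpace ℝ (Fin m) =>
          α x w * β (x - t⁻¹ • w) (t • (x - y) - w)) volume :=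
        hAcont.integrable_of_hasCompactSupport
          (HasCompactSupport.intro (isCompact_closedBall _ _) hsuppA)
      have hBint : Integrable (fun w : EuclideanSpace ℝ (Fin m) =>
          α x w * β x (t • (x - y) - w)) volume :=
        hBcont.integrable_of_hasCompactSupport
          (HasCompactSupport.intro (isCompact_closedBall _ _) hsuppB)
      have hKeq : K x y = (t ^ m : ℝ) • ∫ w, (α x w * β (x - t⁻¹ • w) (t • (x - y) - w)
          - α x w * β x (t • (x - y) - w)) := by
        rw [hK]
        simp only
        rw [comp_kernel_cov α β x y ht0, fibConv_cov α β x (t • (x - y)),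
          integral_sub hAint hBint, smul_sub, smul_smul, two_mul, pow_add, mul_assoc,
          mul_inv_cancel₀ (pow_ne_zero m htne), mul_one]
        rw [smul_sub]
      -- bound the difference integral
      have hbint : Integrable ((Metric.closedBall (0 : EuclideanSpace ℝ (Fin m)) Rα).indicator
          (fun _ => Mα * (Lβ' * (Rα / t)))) volume := by
        apply IntegrableOn.integrable_indicator _ measurableSet_closedBall
        exact integrableOn_const measure_closedBall_lt_top.ne
      have hablow : ∀ w, ‖α x w * β (x - t⁻¹ • w) (t • (x - y) - w)
          - α x w * β x (t • (x - y) - w)‖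
          ≤ (Metric.closedBall (0 : EuclideanSpace ℝ (Fin m)) Rα).indicator
            (fun _ => Mα * (Lβ' * (Rα / t))) w := by
        intro w
        by_cases hw : w ∈ Metric.closedBall (0 : EuclideanSpace ℝ (Fin m)) Rα
        · rw [Set.indicator_of_mem hw]
          rw [Metric.mem_closedBall, dist_zero_right] at hw
          have heq : α x w * β (x - t⁻¹ • w) (t • (x - y) - w)
              - α x w * β x (t • (x - y) - w)
              = α x w * (β (x - t⁻¹ • w) (t • (x - y) - w) - β x (t • (x - y) - w)) := by
            ring
          rw [heq, norm_mul]
          have h1 : ‖β (x - t⁻¹ • w) (t • (x - y) - w) - β x (t • (x - y) - w)‖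
              ≤ Lβ' * (Rα / t) := by
            refine (hβLip' _ _ _).trans ?_
            apply mul_le_mul_of_nonneg_left _ hLβ'0
            have he : x - t⁻¹ • w - x = -(t⁻¹ • w) := by abel
            rw [he, norm_neg, norm_smul, Real.norm_eq_abs,
              abs_of_pos (inv_pos.2 ht0), div_eq_inv_mul]
            exact mul_le_mul_of_nonneg_left hw (inv_nonneg.2 ht0.le)
          exact mul_le_mul (hMα x w) h1 (norm_nonneg _) hMα0
        · rw [Set.indicator_of_notMem hw, hsuppA w hw, hsuppB w hw]
          simp
      have hbound : ‖∫ w, (α x w * β (x - t⁻¹ • w) (t • (x - y) - w)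
          - α x w * β x (t • (x - y) - w))‖ ≤ Mα * (Lβ' * (Rα / t)) * Vα := by
        refine (norm_integral_le_of_norm_le hbint
          (Filter.Eventually.of_forall hablow)).trans (le_of_eq ?_)
        rw [integral_indicator_const _ measurableSet_closedBall, smul_eq_mul, measureReal_def, ← hVα]
        ring
      rw [hKeq, norm_smul, Real.norm_eq_abs, abs_of_pos (pow_pos ht0 m)]
      calc t ^ m * ‖∫ w, (α x w * β (x - t⁻¹ • w) (t • (x - y) - w)
              - α x w * β x (t • (x - y) - w))‖
            ≤ t ^ m * (Mα * (Lβ' * (Rα / t)) * Vα) :=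
            mul_le_mul_of_nonneg_left hbound (pow_nonneg ht0.le m)
        _ = C * t ^ m / t := by rw [hC]; field_simp
    · -- far case : kernel vanishes
      have hfar : R < t * ‖x - y‖ := by
        rw [not_le] at hxy
        calc R = t * (R / t) := by field_simp
          _ < t * ‖x - y‖ := by exact mul_lt_mul_of_pos_left hxy ht0
      have hz1 : (∫ z, α x (t • (x - z)) * β z (t • (z - y))) = 0 := by
        apply integral_eq_zero_of_ae
        refine Filter.Eventually.of_forall fun z => ?_
        show α x (t • (x - z)) * β z (t • (z - y)) = 0
        rcases eq_or_ne (α x (t • (x - z))) 0 with h1 | h1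
        · rw [h1, zero_mul]
        rcases eq_or_ne (β z (t • (z - y))) 0 with h2 | h2
        · rw [h2, mul_zero]
        exfalso
        have e1 : ‖t • (x - z)‖ ≤ Rα := by
          by_contra hcon
          exact h1 (hαsupp _ _ (not_le.1 hcon))
        have e2 : ‖t • (z - y)‖ ≤ Rβ := by
          by_contra hcon
          exact h2 (hβsupp _ _ (not_le.1 hcon))
        have : t • (x - y) = t • (x - z) + t • (z - y) := by
          rw [← smul_add]
          congr 1
          abel
        have : ‖t • (x - y)‖ ≤ R := by
          rw [this]
          exact (norm_add_le _ _).trans (add_le_add e1 e2)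
        rw [norm_smul, Real.norm_eq_abs, abs_of_pos ht0] at this
        exact absurd this (not_le.2 hfar)
      have hz2 : fibConv α β x (t • (x - y)) = 0 := by
        rw [fibConv]
        apply integral_eq_zero_of_ae
        refine Filter.Eventually.of_forall fun z => ?_
        show α x (t • (x - y) - z) * β x z = 0
        rcases eq_or_ne (α x (t • (x - y) - z)) 0 with h1 | h1
        · rw [h1, zero_mul]
        rcases eq_or_ne (β x z) 0 with h2 | h2
        · rw [h2, mul_zero]
        exfalso
        have e1 : ‖t • (x - y) - z‖ ≤ Rα := by
          by_contra hcon
          exact h1 (hαsupp _ _ (not_le.1 hcon))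
        have e2 : ‖z‖ ≤ Rβ := by
          by_contra hcon
          exact h2 (hβsupp _ _ (not_le.1 hcon))
        have : ‖t • (x - y)‖ ≤ R := by
          calc ‖t • (x - y)‖ = ‖(t • (x - y) - z) + z‖ := by congr 1; abel
            _ ≤ ‖t • (x - y) - z‖ + ‖z‖ := norm_add_le _ _
            _ ≤ R := add_le_add e1 e2
        rw [norm_smul, Real.norm_eq_abs, abs_of_pos ht0] at this
        exact absurd this (not_le.2 hfar)
      have : K x y = 0 := by
        rw [hK]
        simp [hz1, hz2]
      rw [this]
      simp
  -- total mass of g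
  have hgint : (∫⁻ v, g v) = c * volume (Metric.closedBall (0 : EuclideanSpace ℝ (Fin m)) (R / t)) :=
    lintegral_indicator_const measurableSet_closedBall c
  have hgfin : (∫⁻ v, g v) ≠ ∞ := by
    rw [hgint]
    exact ENNReal.mul_ne_top ENNReal.ofReal_ne_top measure_closedBall_lt_top.ne
  have hgle : (∫⁻ v, g v) ≤ (ε : ℝ≥0∞) := by
    rw [hgint, Measure.addHaar_closedBall volume 0 (by positivity : (0:ℝ) ≤ R / t)]
    rw [finrank_euclideanSpace_fin]
    have hball : volume (Metric.ball (0 : EuclideanSpace ℝ (Fin m)) 1) = ENNReal.ofReal V1 :=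
      (ENNReal.ofReal_toReal measure_ball_lt_top.ne).symm
    rw [hball, hc, ← ENNReal.ofReal_mul (by positivity), ← ENNReal.ofReal_mul (by positivity)]
    rw [show (ε : ℝ≥0∞) = ENNReal.ofReal (ε : ℝ) from ENNReal.ofReal_coe_nnreal.symm]
    apply ENNReal.ofReal_le_ofReal
    have hteq : C * t ^ m / t * ((R / t) ^ m * V1) = D / t := by
      rw [hD, div_pow]
      field_simp
    rw [hteq, div_le_iff₀ ht0]
    have hε0 : (0 : ℝ) < (ε : ℝ) := hε
    have htD : D / (ε : ℝ) ≤ t := le_trans (le_max_right 1 _) ht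
    calc D = (ε : ℝ) * (D / (ε : ℝ)) := by field_simp
      _ ≤ (ε : ℝ) * t := mul_le_mul_of_nonneg_left htD hε0.le
  calc eLpNorm (fun x => ∫ y, K x y * u y) 2 volume
      ≤ (∫⁻ v, g v) * eLpNorm u 2 volume :=
        schur_bound K g hgmeas hKg hgfin u hu.aestronglyMeasurable.aemeasurable
    _ ≤ (ε : ℝ≥0∞) * eLpNorm u 2 volume := mul_le_mul_left hgle _
end

section
/- For α a continuous compactly supported function on ℝ^m × ℝ^m and α*(x,w) := conj(α(x,−w)), the operators T^t with kernel t^m α(x,t(x−y)) satisfy ‖T^t_{α*} − (T^t_α)*‖ → 0 in operator norm as t → ∞ (assuming α is uniformly Lipschitz in the first variable). -/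
open MeasureTheory
open scoped NNReal ENNReal

private lemma schur_bound_s11 {X : Type*} [MeasurableSpace X] (μ : Measure X) [SigmaFinite μ]
    {B : X → X → ℝ≥0∞} (hB : Measurable (Function.uncurry B))
    {A : ℝ≥0∞} (h1 : ∀ x, ∫⁻ y, B x y ∂μ ≤ A) (h2 : ∀ y, ∫⁻ x, B x y ∂μ ≤ A)
    {f : X → ℝ≥0∞} (hf : Measurable f) :
    ∫⁻ x, (∫⁻ y, B x y * f y ∂μ) ^ (2:ℝ) ∂μ ≤ (A * A) * ∫⁻ y, f y ^ (2:ℝ) ∂μ := by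
  have hBx : ∀ x, Measurable (B x) := fun x => hB.comp measurable_prodMk_left
  have hBy : ∀ y, Measurable (fun x => B x y) := fun y => hB.comp measurable_prodMk_right
  have hf2 : Measurable (fun y => f y ^ (2:ℝ)) := hf.pow_const _
  have hprod : Measurable (Function.uncurry fun x y => B x y * f y ^ (2:ℝ)) :=
    hB.mul (hf2.comp measurable_snd)
  have hGm : Measurable (fun x => ∫⁻ y, B x y * f y ^ (2:ℝ) ∂μ) :=
    Measurable.lintegral_prod_right hprod
  have key : ∀ x, (∫⁻ y, B x y * f y ∂μ) ^ (2:ℝ)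
      ≤ A * ∫⁻ y, B x y * f y ^ (2:ℝ) ∂μ := by
    intro x
    have hpq : Real.HolderConjugate 2 2 := Real.holderConjugate_iff.mpr ⟨one_lt_two, by norm_num⟩
    have cs := ENNReal.lintegral_mul_le_Lp_mul_Lq μ hpq
      (f := fun y => B x y ^ (1/2:ℝ)) (g := fun y => B x y ^ (1/2:ℝ) * f y)
      ((hBx x).pow_const (1/2:ℝ)).aemeasurable
      (((hBx x).pow_const (1/2:ℝ)).mul hf).aemeasurable
    simp only [Pi.mul_apply] at cs
    have e1 : ∫⁻ y, B x y ^ (1/2:ℝ) * (B x y ^ (1/2:ℝ) * f y) ∂μ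
        = ∫⁻ y, B x y * f y ∂μ := by
      refine lintegral_congr fun y => ?_
      rw [← mul_assoc, ← ENNReal.rpow_add_of_nonneg _ _ (by norm_num) (by norm_num)]
      norm_num
    have e2 : ∫⁻ y, (B x y ^ (1/2:ℝ)) ^ (2:ℝ) ∂μ = ∫⁻ y, B x y ∂μ :=
      lintegral_congr fun y => by rw [← ENNReal.rpow_mul]; norm_num
    have e3 : ∫⁻ y, (B x y ^ (1/2:ℝ) * f y) ^ (2:ℝ) ∂μ
        = ∫⁻ y, B x y * f y ^ (2:ℝ) ∂μ :=
      lintegral_congr fun y => by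
        rw [ENNReal.mul_rpow_of_nonneg _ _ (by norm_num : (0:ℝ) ≤ 2), ← ENNReal.rpow_mul]
        norm_num
    rw [e1, e2, e3] at cs
    calc (∫⁻ y, B x y * f y ∂μ) ^ (2:ℝ)
        ≤ ((∫⁻ y, B x y ∂μ) ^ (1/2:ℝ)
            * (∫⁻ y, B x y * f y ^ (2:ℝ) ∂μ) ^ (1/2:ℝ)) ^ (2:ℝ) :=
          ENNReal.rpow_le_rpow cs (by norm_num)
      _ = ((∫⁻ y, B x y ∂μ) ^ (1/2:ℝ)) ^ (2:ℝ)
            * ((∫⁻ y, B x y * f y ^ (2:ℝ) ∂μ) ^ (1/2:ℝ)) ^ (2:ℝ) :=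
          ENNReal.mul_rpow_of_nonneg _ _ (by norm_num)
      _ = (∫⁻ y, B x y ∂μ) * ((∫⁻ y, B x y * f y ^ (2:ℝ) ∂μ) ^ (1/2:ℝ)) ^ (2:ℝ) := by
          rw [← ENNReal.rpow_mul]; norm_num
      _ = (∫⁻ y, B x y ∂μ) * ∫⁻ y, B x y * f y ^ (2:ℝ) ∂μ := by
          rw [← ENNReal.rpow_mul]; norm_num
      _ ≤ A * ∫⁻ y, B x y * f y ^ (2:ℝ) ∂μ := mul_le_mul_left (h1 x) _
  calc ∫⁻ x, (∫⁻ y, B x y * f y ∂μ) ^ (2:ℝ) ∂μ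
      ≤ ∫⁻ x, A * ∫⁻ y, B x y * f y ^ (2:ℝ) ∂μ ∂μ := lintegral_mono key
    _ = A * ∫⁻ x, ∫⁻ y, B x y * f y ^ (2:ℝ) ∂μ ∂μ := lintegral_const_mul A hGm
    _ = A * ∫⁻ y, ∫⁻ x, B x y * f y ^ (2:ℝ) ∂μ ∂μ := by
        rw [lintegral_lintegral_swap hprod.aemeasurable]
    _ = A * ∫⁻ y, (∫⁻ x, B x y ∂μ) * f y ^ (2:ℝ) ∂μ := by
        congr 1
        exact lintegral_congr fun y => lintegral_mul_const _ (hBy y)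
    _ ≤ A * ∫⁻ y, A * f y ^ (2:ℝ) ∂μ := by
        gcongr with y
        exact h2 y
    _ = (A * A) * ∫⁻ y, f y ^ (2:ℝ) ∂μ := by
        rw [lintegral_const_mul A hf2, mul_assoc]

/-- Asymptotic compatibility with adjoints: for `α` continuous, compactly supported
on `ℝᵐ × ℝᵐ` and uniformly Lipschitz in the first variable, with
`α*(x,w) = conj (α(x,−w))`, the operators `T^t` with kernel `tᵐ α(x, t(x−y))`
satisfy `‖T^t_{α*} − (T^t_α)*‖ → 0` in operator norm as `t → ∞`.
(The kernel of `T^t_{α*} − (T^t_α)*` is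
`tᵐ (conj (α(x, −t(x−y))) − conj (α(y, −t(x−y))))`.) -/
theorem adjoint_asymptotically_compatible (m : ℕ)
    (α : EuclideanSpace ℝ (Fin m) → EuclideanSpace ℝ (Fin m) → ℂ)
    (hα : Continuous (Function.uncurry α)) (hαc : HasCompactSupport (Function.uncurry α))
    (Lα : ℝ) (hαLip : ∀ x x' w, ‖α x w - α x' w‖ ≤ Lα * ‖x - x'‖) :
    ∀ ε : ℝ≥0, 0 < ε → ∃ T : ℝ, 1 ≤ T ∧ ∀ t ≥ T,
      ∀ u : EuclideanSpace ℝ (Fin m) → ℂ, MemLp u 2 volume →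
        eLpNorm (fun x => ∫ y,
            ((t ^ m : ℝ) • ((starRingEnd ℂ) (α x (-(t • (x - y))))
              - (starRingEnd ℂ) (α y (-(t • (x - y)))))) * u y) 2 volume
          ≤ (ε : ℝ≥0∞) * eLpNorm u 2 volume := by
  -- support radius
  obtain ⟨R₀, hR₀⟩ := hαc.isBounded.subset_closedBall 0
  set R : ℝ := max R₀ 1 with hRdef
  have hR1 : (1:ℝ) ≤ R := le_max_right _ _
  have hRpos : (0:ℝ) < R := lt_of_lt_of_le one_pos hR1
  have hsupp : ∀ x w, R < ‖w‖ → α x w = 0 := by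
    intro x w hw
    by_contra h
    have hmem : (x, w) ∈ tsupport (Function.uncurry α) :=
      subset_closure (by exact h)
    have h2 := hR₀ hmem
    rw [Metric.mem_closedBall, dist_zero_right] at h2
    have h3 : ‖w‖ ≤ R₀ := le_trans (norm_snd_le (x, w)) h2
    have : R₀ ≤ R := le_max_left _ _
    linarith
  -- Lipschitz constant
  set L : ℝ := max Lα 1 with hLdef
  have hL1 : (1:ℝ) ≤ L := le_max_right _ _
  have hLpos : (0:ℝ) < L := lt_of_lt_of_le one_pos hL1
  have hLip : ∀ x x' w, ‖α x w - α x' w‖ ≤ L * ‖x - x'‖ := fun x x' w =>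
    (hαLip x x' w).trans (mul_le_mul_of_nonneg_right (le_max_left _ _) (norm_nonneg _))
  -- volume of unit ball
  set V : ℝ := (volume (Metric.ball (0 : EuclideanSpace ℝ (Fin m)) 1)).toReal with hVdef
  have hVnn : (0:ℝ) ≤ V := ENNReal.toReal_nonneg
  have hVfin : volume (Metric.ball (0 : EuclideanSpace ℝ (Fin m)) 1) ≠ ⊤ := measure_ball_lt_top.ne
  have hVol : volume (Metric.ball (0 : EuclideanSpace ℝ (Fin m)) 1) = ENNReal.ofReal V := by
    rw [hVdef, ENNReal.ofReal_toReal hVfin]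
  set Cst : ℝ := L * R ^ (m + 1) * V with hCst
  have hCnn : (0:ℝ) ≤ Cst := by positivity
  intro ε hε
  have hεR : (0:ℝ) < (ε : ℝ) := hε
  refine ⟨max 1 (Cst / ε), le_max_left _ _, ?_⟩
  intro t ht u hu
  have ht1 : (1:ℝ) ≤ t := le_trans (le_max_left _ _) ht
  have htpos : (0:ℝ) < t := lt_of_lt_of_le one_pos ht1
  set r : ℝ := R / t with hrdef
  have hrpos : (0:ℝ) < r := div_pos hRpos htpos
  set c : ℝ := t ^ m * L * r with hcdef
  have hcnn : (0:ℝ) ≤ c := by positivity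
  set Ce : ℝ≥0∞ := ENNReal.ofReal c with hCe
  set B : EuclideanSpace ℝ (Fin m) → EuclideanSpace ℝ (Fin m) → ℝ≥0∞ := fun x y => if ‖x - y‖ ≤ r then Ce else 0 with hBdef
  have hBmeas : Measurable (Function.uncurry B) := by
    have hcl : IsClosed {p : EuclideanSpace ℝ (Fin m) × EuclideanSpace ℝ (Fin m) | ‖p.1 - p.2‖ ≤ r} :=
      isClosed_le (by fun_prop) continuous_const
    exact Measurable.ite hcl.measurableSet measurable_const measurable_const
  set A : ℝ≥0∞ := Ce * (ENNReal.ofReal (r ^ m) * volume (Metric.ball (0 : EuclideanSpace ℝ (Fin m)) 1)) with hAdef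
  have hball : ∀ z : EuclideanSpace ℝ (Fin m), volume (Metric.closedBall z r)
      = ENNReal.ofReal (r ^ m) * volume (Metric.ball (0 : EuclideanSpace ℝ (Fin m)) 1) := by
    intro z
    rw [Measure.addHaar_closedBall volume z hrpos.le, finrank_euclideanSpace_fin]
  have hmem1 : ∀ x y : EuclideanSpace ℝ (Fin m), y ∈ Metric.closedBall x r ↔ ‖x - y‖ ≤ r := by
    intro x y
    rw [Metric.mem_closedBall, dist_eq_norm, norm_sub_rev]
  have hmem2 : ∀ x y : EuclideanSpace ℝ (Fin m), x ∈ Metric.closedBall y r ↔ ‖x - y‖ ≤ r := by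
    intro x y
    rw [Metric.mem_closedBall, dist_eq_norm]
  have h1 : ∀ x : EuclideanSpace ℝ (Fin m), ∫⁻ y, B x y ∂volume ≤ A := by
    intro x
    have : ∫⁻ y, B x y ∂volume
        = ∫⁻ y, (Metric.closedBall x r).indicator (fun _ => Ce) y ∂volume := by
      refine lintegral_congr fun y => ?_
      classical
      simp only [hBdef, Set.indicator_apply]
      exact if_congr (hmem1 x y).symm rfl rfl
    rw [this, lintegral_indicator_const measurableSet_closedBall, hball x, hAdef]
  have h2 : ∀ y : EuclideanSpace ℝ (Fin m), ∫⁻ x, B x y ∂volume ≤ A := by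
    intro y
    have : ∫⁻ x, B x y ∂volume
        = ∫⁻ x, (Metric.closedBall y r).indicator (fun _ => Ce) x ∂volume := by
      refine lintegral_congr fun x => ?_
      classical
      simp only [hBdef, Set.indicator_apply]
      exact if_congr (hmem2 x y).symm rfl rfl
    rw [this, lintegral_indicator_const measurableSet_closedBall, hball y, hAdef]
  -- A ≤ ε
  have hAle : A ≤ (ε : ℝ≥0∞) := by
    have hA' : A = ENNReal.ofReal (c * (r ^ m * V)) := by
      rw [hAdef, hVol, ← ENNReal.ofReal_mul (by positivity), ← ENNReal.ofReal_mul hcnn]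
    have hceq : c * (r ^ m * V) = Cst / t := by
      rw [hcdef, hrdef, hCst]
      field_simp
      have htt : t ^ m * t⁻¹ ^ m = 1 := by rw [← mul_pow, mul_inv_cancel₀ htpos.ne', one_pow]
      linear_combination (R * R ^ m * V) * htt
    have hCt : Cst / t ≤ (ε : ℝ) := by
      rw [div_le_iff₀ htpos]
      have h5 : Cst / (ε : ℝ) ≤ t := le_trans (le_max_right _ _) ht
      calc Cst = (Cst / (ε : ℝ)) * (ε : ℝ) := by field_simp
        _ ≤ t * (ε : ℝ) := mul_le_mul_of_nonneg_right h5 hεR.le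
        _ = (ε : ℝ) * t := mul_comm _ _
    calc A = ENNReal.ofReal (c * (r ^ m * V)) := hA'
      _ ≤ ENNReal.ofReal (ε : ℝ) := ENNReal.ofReal_le_ofReal (hceq ▸ hCt)
      _ = (ε : ℝ≥0∞) := ENNReal.ofReal_coe_nnreal
  -- the kernel
  set K : EuclideanSpace ℝ (Fin m) → EuclideanSpace ℝ (Fin m) → ℂ := fun x y =>
    ((t ^ m : ℝ) • ((starRingEnd ℂ) (α x (-(t • (x - y))))
      - (starRingEnd ℂ) (α y (-(t • (x - y)))))) with hKdef
  have hK : ∀ x y : EuclideanSpace ℝ (Fin m), (‖K x y‖₊ : ℝ≥0∞) ≤ B x y := by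
    intro x y
    by_cases h : ‖x - y‖ ≤ r
    · simp only [hBdef, if_pos h, hCe]
      rw [← enorm_eq_nnnorm, ← ofReal_norm]
      refine ENNReal.ofReal_le_ofReal ?_
      have hnorm : ‖K x y‖ = t ^ m * ‖α x (-(t • (x - y))) - α y (-(t • (x - y)))‖ := by
        rw [hKdef]
        rw [norm_smul, ← map_sub (starRingEnd ℂ), RCLike.norm_conj,
          Real.norm_eq_abs, abs_of_nonneg (by positivity)]
      rw [hnorm, hcdef]
      calc t ^ m * ‖α x (-(t • (x - y))) - α y (-(t • (x - y)))‖
          ≤ t ^ m * (L * ‖x - y‖) :=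
            mul_le_mul_of_nonneg_left (hLip x y _) (by positivity)
        _ ≤ t ^ m * (L * r) := by
            apply mul_le_mul_of_nonneg_left _ (by positivity)
            exact mul_le_mul_of_nonneg_left h hLpos.le
        _ = t ^ m * L * r := by ring
    · have hw : R < ‖-(t • (x - y))‖ := by
        rw [norm_neg, norm_smul, Real.norm_eq_abs, abs_of_pos htpos]
        have : r < ‖x - y‖ := not_le.mp h
        calc R = t * r := by rw [hrdef]; field_simp
          _ < t * ‖x - y‖ := by exact mul_lt_mul_of_pos_left this htpos
      have hx0 := hsupp x _ hw
      have hy0 := hsupp y _ hw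
      have hK0 : K x y = 0 := by
        rw [hKdef]; simp [hx0, hy0]
      simp [hBdef, if_neg h, hK0]
  -- measurable representative of u
  have hum := hu.aestronglyMeasurable
  set v : EuclideanSpace ℝ (Fin m) → ℂ := hum.mk u with hvdef
  have hvm : StronglyMeasurable v := hum.stronglyMeasurable_mk
  have huv : u =ᵐ[volume] v := hum.ae_eq_mk
  set f0 : EuclideanSpace ℝ (Fin m) → ℝ≥0∞ := fun y => (‖v y‖₊ : ℝ≥0∞) with hf0
  have hf0m : Measurable f0 := hvm.measurable.enorm
  have schur := schur_bound_s11 volume hBmeas h1 h2 hf0m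
  -- pointwise bound on the output
  have hpt : ∀ x : EuclideanSpace ℝ (Fin m), (‖∫ y, K x y * u y‖₊ : ℝ≥0∞) ≤ ∫⁻ y, B x y * f0 y ∂volume := by
    intro x
    calc (‖∫ y, K x y * u y‖₊ : ℝ≥0∞)
        ≤ ∫⁻ y, (‖K x y * u y‖₊ : ℝ≥0∞) ∂volume := enorm_integral_le_lintegral_enorm _
      _ = ∫⁻ y, (‖K x y‖₊ : ℝ≥0∞) * (‖u y‖₊ : ℝ≥0∞) ∂volume := by
          refine lintegral_congr fun y => ?_
          rw [nnnorm_mul, ENNReal.coe_mul]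
      _ = ∫⁻ y, (‖K x y‖₊ : ℝ≥0∞) * (‖v y‖₊ : ℝ≥0∞) ∂volume :=
          lintegral_congr_ae (huv.mono fun y hy => by simp only [hy])
      _ ≤ ∫⁻ y, B x y * f0 y ∂volume :=
          lintegral_mono fun y => mul_le_mul_left (hK x y) _
  -- eLpNorm computations
  have he2 : ∀ g : EuclideanSpace ℝ (Fin m) → ℂ, eLpNorm g 2 volume
      = (∫⁻ x, (‖g x‖₊ : ℝ≥0∞) ^ (2:ℝ) ∂volume) ^ (1/2:ℝ) := by
    intro g
    rw [eLpNorm_eq_lintegral_rpow_enorm_toReal two_ne_zero ENNReal.ofNat_ne_top]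
    simp only [enorm_eq_nnnorm]
    norm_num
  have huveq : ∫⁻ y, (‖u y‖₊ : ℝ≥0∞) ^ (2:ℝ) ∂volume = ∫⁻ y, f0 y ^ (2:ℝ) ∂volume :=
    lintegral_congr_ae (huv.mono fun y hy => by simp only [hf0, hy])
  calc eLpNorm (fun x => ∫ y, K x y * u y) 2 volume
      = (∫⁻ x, (‖∫ y, K x y * u y‖₊ : ℝ≥0∞) ^ (2:ℝ) ∂volume) ^ (1/2:ℝ) := he2 _
    _ ≤ (∫⁻ x, (∫⁻ y, B x y * f0 y ∂volume) ^ (2:ℝ) ∂volume) ^ (1/2:ℝ) := by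
        apply ENNReal.rpow_le_rpow _ (by norm_num)
        exact lintegral_mono fun x => ENNReal.rpow_le_rpow (hpt x) (by norm_num)
    _ ≤ ((A * A) * ∫⁻ y, f0 y ^ (2:ℝ) ∂volume) ^ (1/2:ℝ) :=
        ENNReal.rpow_le_rpow schur (by norm_num)
    _ = A * (∫⁻ y, f0 y ^ (2:ℝ) ∂volume) ^ (1/2:ℝ) := by
        rw [ENNReal.mul_rpow_of_nonneg _ _ (by norm_num : (0:ℝ) ≤ 1/2)]
        congr 1
        have : A * A = A ^ (2:ℝ) := by
          rw [show (2:ℝ) = ((2:ℕ):ℝ) by norm_num, ENNReal.rpow_natCast, pow_two]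
        rw [this, ← ENNReal.rpow_mul]
        norm_num
    _ = A * eLpNorm u 2 volume := by rw [he2 u, huveq]
    _ ≤ (ε : ℝ≥0∞) * eLpNorm u 2 volume := mul_le_mul_left hAle _
end

section
/- Let G = Hₙ and define the exponential map exp_x: T_H G_x ≅ G → G by exp_x(y) = y·x (Heisenberg multiplication). Then for each parabolic arrow v ∈ G, the curve c(t) = exp_x(δ_t v) satisfies c(0) = x, c'(0) equals the horizontal part of v translated to x, and ½c''(0) projects in T_xG/H_x to the vertical component of v; i.e., c represents the parabolic arrow v at x. -/
/-- The underlying space of the Heisenberg group `Hₙ = ℝ^{2n+1}`. -/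
abbrev Heisenberg (n : ℕ) : Type := ℝ × (Fin n → ℝ) × (Fin n → ℝ)

/-- The Heisenberg group law. -/
noncomputable def heisenbergMul {n : ℕ} (x y : Heisenberg n) : Heisenberg n :=
  (x.1 + y.1 + (1 / 2) * ∑ j : Fin n, (x.2.1 j * y.2.2 j - y.2.1 j * x.2.2 j),
   x.2.1 + y.2.1, x.2.2 + y.2.2)

/-- The Heisenberg dilation `δ_t(v₀,v') = (t²v₀, tv')`. -/
noncomputable def heisenbergDilation {n : ℕ} (t : ℝ) (v : Heisenberg n) : Heisenberg n :=
  (t ^ 2 * v.1, t • v.2.1, t • v.2.2)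

/-- The canonical contact form `θ_x(w) = w₀ + ½ Σᵢ (xᵢ wₙ₊ᵢ − xₙ₊ᵢ wᵢ)`, whose kernel
at `x` is the horizontal subspace `H_x`; `θ_x` also identifies `T_xG/H_x ≅ ℝ`
(the vertical direction). -/
noncomputable def contactTheta {n : ℕ} (x w : Heisenberg n) : ℝ :=
  w.1 + (1 / 2) * ∑ i : Fin n, (x.2.1 i * w.2.2 i - x.2.2 i * w.2.1 i)

/-- On `G = Hₙ` with `exp_x(y) = y·x`, for every parabolic arrow `v = (v₀, v') ∈ G`
the curve `c(t) = exp_x(δ_t v)` satisfies: `c(0) = x`; `c'(0)` is the right translate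
to `x` of the horizontal part of `v` (in particular `c'(0) ∈ H_x = ker θ_x`); and
`½c''(0)` projects in `T_xG/H_x` (via `θ_x`) to the vertical component `v₀` of `v`.
Hence `c` represents the parabolic arrow `v` at `x`. -/
theorem exp_curve_represents_parabolic_arrow (n : ℕ) (x v : Heisenberg n) :
    let c : ℝ → Heisenberg n := fun t => heisenbergMul (heisenbergDilation t v) x
    c 0 = x ∧
    deriv c 0 = ((1 / 2) * ∑ j : Fin n, (v.2.1 j * x.2.2 j - x.2.1 j * v.2.2 j),
      v.2.1, v.2.2) ∧
    contactTheta x (deriv c 0) = 0 ∧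
    contactTheta x ((1 / 2 : ℝ) • deriv (deriv c) 0) = v.1 := by
  intro c
  set b : ℝ := (1 / 2) * ∑ j : Fin n, (v.2.1 j * x.2.2 j - x.2.1 j * v.2.2 j) with hb
  have hc : c = fun t => (v.1 * t ^ 2 + b * t + x.1,
      t • v.2.1 + x.2.1, t • v.2.2 + x.2.2) := by
    funext t
    show heisenbergMul (heisenbergDilation t v) x = _
    simp only [heisenbergMul, heisenbergDilation, Pi.smul_apply, smul_eq_mul]
    refine Prod.ext ?_ rfl
    have hsum : ∑ j : Fin n, (t * v.2.1 j * x.2.2 j - x.2.1 j * (t * v.2.2 j))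
        = t * ∑ j : Fin n, (v.2.1 j * x.2.2 j - x.2.1 j * v.2.2 j) := by
      rw [Finset.mul_sum]
      exact Finset.sum_congr rfl fun j _ => by ring
    simp only [hsum, hb]
    ring
  -- derivative of c
  have hderiv : ∀ t : ℝ, HasDerivAt c (2 * v.1 * t + b, v.2.1, v.2.2) t := by
    intro t
    rw [hc]
    have h1 : HasDerivAt (fun s : ℝ => v.1 * s ^ 2 + b * s + x.1) (2 * v.1 * t + b) t := by
      have := (((hasDerivAt_pow 2 t).const_mul v.1).add
        ((hasDerivAt_id t).const_mul b)).add_const x.1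
      refine this.congr_deriv ?_
      simp; ring
    have h2 : HasDerivAt (fun s : ℝ => s • v.2.1 + x.2.1) v.2.1 t := by
      simpa using ((hasDerivAt_id t).smul_const v.2.1).add_const x.2.1
    have h3 : HasDerivAt (fun s : ℝ => s • v.2.2 + x.2.2) v.2.2 t := by
      simpa using ((hasDerivAt_id t).smul_const v.2.2).add_const x.2.2
    exact h1.prodMk (h2.prodMk h3)
  have hderiv_eq : deriv c = fun t => ((2 * v.1 * t + b, v.2.1, v.2.2) : Heisenberg n) :=
    funext fun t => (hderiv t).deriv
  have hderiv2 : HasDerivAt (deriv c) ((2 * v.1, 0, 0) : Heisenberg n) 0 := by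
    rw [hderiv_eq]
    have h1 : HasDerivAt (fun s : ℝ => 2 * v.1 * s + b) (2 * v.1) (0 : ℝ) := by
      simpa using ((hasDerivAt_id (0 : ℝ)).const_mul (2 * v.1)).add_const b
    exact h1.prodMk ((hasDerivAt_const _ _).prodMk (hasDerivAt_const _ _))
  have hd0 : deriv c 0 = ((b, v.2.1, v.2.2) : Heisenberg n) := by
    rw [hderiv_eq]; simp
  refine ⟨?_, ?_, ?_, ?_⟩
  · rw [hc]; simp
  · rw [hd0]
  · rw [hd0]
    simp only [contactTheta, hb]
    have : ∑ i : Fin n, (x.2.1 i * v.2.2 i - x.2.2 i * v.2.1 i)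
        = - ∑ j : Fin n, (v.2.1 j * x.2.2 j - x.2.1 j * v.2.2 j) := by
      rw [← Finset.sum_neg_distrib]
      exact Finset.sum_congr rfl fun j _ => by ring
    rw [this]; ring
  · rw [hderiv2.deriv]
    simp only [contactTheta, Prod.smul_fst, Prod.smul_snd, smul_eq_mul, Prod.fst, Prod.snd]
    simp
end
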